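/- Let T be a ℤ^d-tile T(A,D), let n₀ ≥ 1, and suppose that for each n ≥ n₀ the set V_n is partitioned into pairwise disjoint nonempty sets V_n = W₁^(n) ∪ W₂^(n) ∪ W₃^(n) satisfying W₁^(n+1) ⊆ C(W₁^(n)) ∪ C(W₂^(n)), W₂^(n+1) ⊆ C(W₂^(n)), and W₃^(n+1) ⊆ C(W₃^(n)) ∪ C(W₂^(n)). Then for all n ≥ n₀ one has C(W₁^(n)) ⊆ W₁^(n+1) and C(W₃^(n)) ⊆ W₃^(n+1); consequently X_n(W₁^(n)) ⊆ X_{n+1}(W₁^(n+1)) and X_n(W₃^(n)) ⊆ X_{n+1}(W₃^(n+1)). -/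

import Mathlib

open Set Filter Topology Matrix

noncomputable section

/-- A set is the union of two nonempty separated sets. -/
def SepUnion {α : Type*} [TopologicalSpace α] (S : Set α) : Prop :=
  ∃ U V : Set α, S = U ∪ V ∧ U.Nonempty ∧ V.Nonempty ∧
    closure U ∩ V = ∅ ∧ U ∩ closure V = ∅

/-- `X` is a cut set of `T`: `X ⊆ T` and `T \ X` is disconnected. -/
def IsCutSet {α : Type*} [TopologicalSpace α] (T X : Set α) : Prop :=
  X ⊆ T ∧ SepUnion (T \ X)

/-- `X` is an irreducible cut set of `T`. -/
def IsIrredCutSet {α : Type*} [TopologicalSpace α] (T X : Set α) : Prop :=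
  IsCutSet T X ∧ ∀ X₀ : Set α, X₀ ⊂ X → closure X₀ ∩ T ⊆ X₀ → ¬ SepUnion (T \ X₀)

/-- The real matrix obtained from an integer matrix. -/
def rmat {d : ℕ} (A : Matrix (Fin d) (Fin d) ℤ) : Matrix (Fin d) (Fin d) ℝ :=
  A.map Int.cast

/-- The real vector obtained from an integer vector. -/
def rvec {d : ℕ} (v : Fin d → ℤ) : Fin d → ℝ := fun i => (v i : ℝ)

/-- The translate `T + v` of `T` by a lattice vector `v`. -/
def trT {d : ℕ} (T : Set (Fin d → ℝ)) (v : Fin d → ℤ) : Set (Fin d → ℝ) :=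
  (fun x => x + rvec v) '' T

/-- Every complex eigenvalue of `A` has modulus `> 1`. -/
def Expanding {d : ℕ} (A : Matrix (Fin d) (Fin d) ℤ) : Prop :=
  ∀ μ : ℂ, Module.End.HasEigenvalue (Matrix.toLin' (A.map (Int.cast : ℤ → ℂ))) μ →
    1 < ‖μ‖

/-- `D` is a complete set of coset representatives of `ℤ^d / A ℤ^d`. -/
def ResidueSystem {d : ℕ} (A : Matrix (Fin d) (Fin d) ℤ) (D : Set (Fin d → ℤ)) : Prop :=
  ∀ x : Fin d → ℤ, ∃! e, e ∈ D ∧ ∃ y : Fin d → ℤ, x = A.mulVec y + e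

/-- `T` is the attractor `T(A,D)`: nonempty, compact, with `A·T = T + D`. -/
def SelfAffine {d : ℕ} (A : Matrix (Fin d) (Fin d) ℤ) (D : Set (Fin d → ℤ))
    (T : Set (Fin d → ℝ)) : Prop :=
  T.Nonempty ∧ IsCompact T ∧
    (rmat A).mulVec '' T = ⋃ e ∈ D, (fun x => x + rvec e) '' T

/-- `T = T(A,D)` is a `ℤ^d`-tile: a self-affine attractor for an expanding integer
matrix and a standard digit set, with nonempty interior, tiling `ℝ^d` by `ℤ^d`. -/
def IsZdTile {d : ℕ} (A : Matrix (Fin d) (Fin d) ℤ) (D : Set (Fin d → ℤ))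
    (T : Set (Fin d → ℝ)) : Prop :=
  Expanding A ∧ ResidueSystem A D ∧ SelfAffine A D T ∧ (interior T).Nonempty ∧
    (⋃ v : Fin d → ℤ, trT T v) = univ ∧
    Pairwise fun v₁ v₂ : Fin d → ℤ => interior (trT T v₁) ∩ trT T v₂ = ∅

/-- `V_n = D + A·D + ⋯ + A^{n-1}·D`, the vertex set of the `n`-th Hata graph. -/
def Vset {d : ℕ} (A : Matrix (Fin d) (Fin d) ℤ) (D : Set (Fin d → ℤ)) (n : ℕ) :
    Set (Fin d → ℤ) :=
  {v | ∃ dig : Fin n → (Fin d → ℤ), (∀ k, dig k ∈ D) ∧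
    v = ∑ k : Fin n, (A ^ (k : ℕ)).mulVec (dig k)}

/-- The set of children `C(U) = A·U + D`. -/
def childSet {d : ℕ} (A : Matrix (Fin d) (Fin d) ℤ) (D : Set (Fin d → ℤ))
    (U : Set (Fin d → ℤ)) : Set (Fin d → ℤ) :=
  {w | ∃ u ∈ U, ∃ e ∈ D, w = A.mulVec u + e}

/-- `X_n(W) = ⋃_{v ∈ W} A^{-n}(T + v)`. -/
def XnSet {d : ℕ} (A : Matrix (Fin d) (Fin d) ℤ) (T : Set (Fin d → ℝ)) (n : ℕ)
    (W : Set (Fin d → ℤ)) : Set (Fin d → ℝ) :=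
  ⋃ v ∈ W, ((rmat A)⁻¹ ^ n).mulVec '' trT T v

/-- The subgraph of the `n`-th Hata graph induced on `W` is connected:
any two vertices of `W` are joined by a path inside `W`, consecutive tiles meeting. -/
def HataConn {d : ℕ} (T : Set (Fin d → ℝ)) (W : Set (Fin d → ℤ)) : Prop :=
  ∀ v ∈ W, ∀ w ∈ W,
    Relation.ReflTransGen (fun a b => a ∈ W ∧ b ∈ W ∧ (trT T a ∩ trT T b).Nonempty) v w


/-!
A child `A u + e` determines its parent `u` and digit `e`, because `D` is a residue system
and `A` is injective on `ℤ^d`. So the children sets of the disjoint sets `W₁, W₂, W₃` are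
disjoint. The children of `W₁^(n)` lie in `V_{n+1}`, but they cannot lie in `W₂^(n+1)` or
`W₃^(n+1)`, which consist of children of `W₂^(n)` and `W₃^(n)`; so they lie in `W₁^(n+1)`,
and symmetrically for `W₃`. The inclusions of the `X_n` follow from `A T = T + D`, which
gives `X_n(W) ⊆ X_{n+1}(C(W))`.
-/

variable {d : ℕ} {A : Matrix (Fin d) (Fin d) ℤ} {D : Set (Fin d → ℤ)}

theorem Expanding.det_ne_zero (hA : Expanding A) : A.det ≠ 0 := by
  have hnot : ¬ Module.End.HasEigenvalue (Matrix.toLin' (A.map (Int.cast : ℤ → ℂ))) 0 :=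
    fun h => (hA 0 h).not_ge (by simp)
  have hdet := ((LinearMap.not_hasEigenvalue_zero_tfae _).out 0 3).mp hnot
  rw [LinearMap.det_toLin', ← Int.cast_det] at hdet
  exact_mod_cast hdet

theorem isUnit_det_rmat (hA : A.det ≠ 0) : IsUnit (rmat A).det := by
  rw [rmat, ← Int.cast_det]
  exact isUnit_iff_ne_zero.mpr (by exact_mod_cast hA)

theorem rvec_add (u v : Fin d → ℤ) : rvec (u + v) = rvec u + rvec v := by
  funext i
  simp [rvec]

theorem rvec_mulVec (A : Matrix (Fin d) (Fin d) ℤ) (v : Fin d → ℤ) :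
    rvec (A *ᵥ v) = rmat A *ᵥ rvec v := by
  funext i
  exact (Int.castRingHom ℝ).map_mulVec A v i

theorem ResidueSystem.eq_of_mulVec_add_eq (hres : ResidueSystem A D)
    (hinj : Function.Injective A.mulVec) {u u' e e' : Fin d → ℤ} (he : e ∈ D) (he' : e' ∈ D)
    (h : A *ᵥ u + e = A *ᵥ u' + e') : u = u' ∧ e = e' := by
  obtain ⟨E, -, huniq⟩ := hres (A *ᵥ u + e)
  have hee' : e = e' := (huniq e ⟨he, u, rfl⟩).trans (huniq e' ⟨he', u', h⟩).symm
  subst hee'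
  exact ⟨hinj (add_right_cancel h), rfl⟩

theorem childSet_mono {U U' : Set (Fin d → ℤ)} (h : U ⊆ U') :
    childSet A D U ⊆ childSet A D U' := by
  rintro w ⟨u, hu, e, he, rfl⟩
  exact ⟨u, h hu, e, he, rfl⟩

theorem childSet_union (U U' : Set (Fin d → ℤ)) :
    childSet A D (U ∪ U') = childSet A D U ∪ childSet A D U' := by
  ext w
  simp only [childSet, mem_union, mem_ofPred_eq]
  constructor
  · rintro ⟨u, hu | hu, e, he, rfl⟩
    exacts [Or.inl ⟨u, hu, e, he, rfl⟩, Or.inr ⟨u, hu, e, he, rfl⟩]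
  · rintro (⟨u, hu, e, he, rfl⟩ | ⟨u, hu, e, he, rfl⟩)
    exacts [⟨u, Or.inl hu, e, he, rfl⟩, ⟨u, Or.inr hu, e, he, rfl⟩]

theorem ResidueSystem.disjoint_childSet (hres : ResidueSystem A D)
    (hinj : Function.Injective A.mulVec) {U U' : Set (Fin d → ℤ)} (h : Disjoint U U') :
    Disjoint (childSet A D U) (childSet A D U') := by
  rw [Set.disjoint_left]
  rintro w ⟨u, hu, e, he, rfl⟩ ⟨u', hu', e', he', heq⟩
  obtain ⟨rfl, -⟩ := hres.eq_of_mulVec_add_eq hinj he he' heq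
  exact Set.disjoint_left.mp h hu hu'

theorem ResidueSystem.childSet_subset_of_subset_union (hres : ResidueSystem A D)
    (hinj : Function.Injective A.mulVec) {U U' W W' : Set (Fin d → ℤ)}
    (hU : childSet A D U ⊆ W ∪ W') (hW' : W' ⊆ childSet A D U') (h : Disjoint U U') :
    childSet A D U ⊆ W :=
  Disjoint.left_le_of_le_sup_right hU ((hres.disjoint_childSet hinj h).mono_right hW')

theorem childSet_Vset_subset (n : ℕ) : childSet A D (Vset A D n) ⊆ Vset A D (n + 1) := by
  rintro w ⟨u, ⟨dig, hdig, rfl⟩, e, he, rfl⟩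
  refine ⟨Fin.cons e dig, Fin.cases he hdig, ?_⟩
  simp only [Fin.sum_univ_succ, Fin.cons_zero, Fin.cons_succ, Fin.val_zero, Fin.val_succ,
    pow_zero, one_mulVec, pow_succ', ← mulVec_mulVec, Matrix.mulVec_sum]
  exact add_comm _ _

theorem XnSet_mono (A : Matrix (Fin d) (Fin d) ℤ) (T : Set (Fin d → ℝ)) (n : ℕ)
    {W W' : Set (Fin d → ℤ)} (h : W ⊆ W') : XnSet A T n W ⊆ XnSet A T n W' :=
  biUnion_subset_biUnion_left h

theorem SelfAffine.XnSet_subset_XnSet_childSet {T : Set (Fin d → ℝ)} (hT : SelfAffine A D T)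
    (hA : A.det ≠ 0) (n : ℕ) (W : Set (Fin d → ℤ)) :
    XnSet A T n W ⊆ XnSet A T (n + 1) (childSet A D W) := by
  simp only [XnSet, subset_def, mem_iUnion]
  rintro _ ⟨v, hv, _, ⟨t, ht, rfl⟩, rfl⟩
  -- `A t = s + e` with `s ∈ T`, `e ∈ D`, so `A^{-n}(t + v) = A^{-(n+1)}(s + (A v + e))`.
  obtain ⟨e, he, s, hs, hst⟩ : ∃ e ∈ D, ∃ s ∈ T, s + rvec e = rmat A *ᵥ t := by
    have : rmat A *ᵥ t ∈ (rmat A).mulVec '' T := ⟨t, ht, rfl⟩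
    rw [hT.2.2] at this
    simpa only [mem_iUnion, mem_image, exists_prop] using this
  refine ⟨A *ᵥ v + e, ⟨v, hv, e, he, rfl⟩, s + rvec (A *ᵥ v + e), ⟨s, hs, rfl⟩, ?_⟩
  have hinv : (rmat A)⁻¹ * rmat A = 1 := nonsing_inv_mul _ (isUnit_det_rmat hA)
  have hpt : s + rvec (A *ᵥ v + e) = rmat A *ᵥ (t + rvec v) := by
    rw [rvec_add, rvec_mulVec, mulVec_add, ← hst]
    abel
  rw [hpt, pow_succ, ← mulVec_mulVec, mulVec_mulVec _ _ (rmat A), hinv, one_mulVec]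

theorem statement19_general {d : ℕ} (A : Matrix (Fin d) (Fin d) ℤ) (D : Set (Fin d → ℤ))
    (T : Set (Fin d → ℝ)) (htile : IsZdTile A D T)
    (n₀ : ℕ) (W₁ W₂ W₃ : ℕ → Set (Fin d → ℤ))
    (hpart : ∀ n, n₀ ≤ n → W₁ n ∪ W₂ n ∪ W₃ n = Vset A D n)
    (hd12 : ∀ n, n₀ ≤ n → Disjoint (W₁ n) (W₂ n))
    (hd13 : ∀ n, n₀ ≤ n → Disjoint (W₁ n) (W₃ n))
    (hd23 : ∀ n, n₀ ≤ n → Disjoint (W₂ n) (W₃ n))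
    (hc1 : ∀ n, n₀ ≤ n → W₁ (n + 1) ⊆ childSet A D (W₁ n) ∪ childSet A D (W₂ n))
    (hc2 : ∀ n, n₀ ≤ n → W₂ (n + 1) ⊆ childSet A D (W₂ n))
    (hc3 : ∀ n, n₀ ≤ n → W₃ (n + 1) ⊆ childSet A D (W₃ n) ∪ childSet A D (W₂ n)) :
    ∀ n, n₀ ≤ n →
      childSet A D (W₁ n) ⊆ W₁ (n + 1) ∧ childSet A D (W₃ n) ⊆ W₃ (n + 1) ∧
      XnSet A T n (W₁ n) ⊆ XnSet A T (n + 1) (W₁ (n + 1)) ∧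
      XnSet A T n (W₃ n) ⊆ XnSet A T (n + 1) (W₃ (n + 1)) := by
  intro n hn
  obtain ⟨hA, hres, hT, -⟩ := htile
  have hinj : Function.Injective A.mulVec := mulVec_injective_of_det_ne_zero hA.det_ne_zero
  have hV : childSet A D (Vset A D n) ⊆ W₁ (n + 1) ∪ W₂ (n + 1) ∪ W₃ (n + 1) := by
    rw [hpart (n + 1) (by omega)]
    exact childSet_Vset_subset n
  rw [← hpart n hn] at hV
  have h₁ : childSet A D (W₁ n) ⊆ W₁ (n + 1) := by
    refine hres.childSet_subset_of_subset_union hinj (W' := W₂ (n + 1) ∪ W₃ (n + 1))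
      (U' := W₂ n ∪ W₃ n) ?_ ?_ (disjoint_union_right.mpr ⟨hd12 n hn, hd13 n hn⟩)
    · rw [← union_assoc]
      exact (childSet_mono (subset_union_left.trans subset_union_left)).trans hV
    · rw [childSet_union]
      exact union_subset ((hc2 n hn).trans subset_union_left)
        ((hc3 n hn).trans (union_subset subset_union_right subset_union_left))
  have h₃ : childSet A D (W₃ n) ⊆ W₃ (n + 1) := by
    refine hres.childSet_subset_of_subset_union hinj (W' := W₁ (n + 1) ∪ W₂ (n + 1))
      (U' := W₁ n ∪ W₂ n) ?_ ?_
      (disjoint_union_right.mpr ⟨(hd13 n hn).symm, (hd23 n hn).symm⟩)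
    · rw [union_comm]
      exact (childSet_mono subset_union_right).trans hV
    · rw [childSet_union]
      exact union_subset (hc1 n hn) ((hc2 n hn).trans subset_union_right)
  have hX := hT.XnSet_subset_XnSet_childSet hA.det_ne_zero n
  exact ⟨h₁, h₃, (hX _).trans (XnSet_mono A T _ h₁), (hX _).trans (XnSet_mono A T _ h₃)⟩

theorem statement19 {d : ℕ} (A : Matrix (Fin d) (Fin d) ℤ) (D : Set (Fin d → ℤ))
    (T : Set (Fin d → ℝ)) (htile : IsZdTile A D T)
    (n₀ : ℕ) (hn₀ : 1 ≤ n₀) (W₁ W₂ W₃ : ℕ → Set (Fin d → ℤ))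
    (hpart : ∀ n, n₀ ≤ n → W₁ n ∪ W₂ n ∪ W₃ n = Vset A D n)
    (hd12 : ∀ n, n₀ ≤ n → Disjoint (W₁ n) (W₂ n))
    (hd13 : ∀ n, n₀ ≤ n → Disjoint (W₁ n) (W₃ n))
    (hd23 : ∀ n, n₀ ≤ n → Disjoint (W₂ n) (W₃ n))
    (hne1 : ∀ n, n₀ ≤ n → (W₁ n).Nonempty)
    (hne2 : ∀ n, n₀ ≤ n → (W₂ n).Nonempty)
    (hne3 : ∀ n, n₀ ≤ n → (W₃ n).Nonempty)
    (hc1 : ∀ n, n₀ ≤ n → W₁ (n + 1) ⊆ childSet A D (W₁ n) ∪ childSet A D (W₂ n))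
    (hc2 : ∀ n, n₀ ≤ n → W₂ (n + 1) ⊆ childSet A D (W₂ n))
    (hc3 : ∀ n, n₀ ≤ n → W₃ (n + 1) ⊆ childSet A D (W₃ n) ∪ childSet A D (W₂ n)) :
    ∀ n, n₀ ≤ n →
      childSet A D (W₁ n) ⊆ W₁ (n + 1) ∧ childSet A D (W₃ n) ⊆ W₃ (n + 1) ∧
      XnSet A T n (W₁ n) ⊆ XnSet A T (n + 1) (W₁ (n + 1)) ∧
      XnSet A T n (W₃ n) ⊆ XnSet A T (n + 1) (W₃ (n + 1)) :=
  statement19_general A D T htile n₀ W₁ W₂ W₃ hpart hd12 hd13 hd23 hc1 hc2 hc3
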